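/- The WAM has globally bilinear commutative transitions: for any WAM execution ρ of initial code t̄, the total number of commutative transitions satisfies |ρ|_c1 + |ρ|_c2 = O((|t̄|+1)·|ρ|_p), where |ρ|_p is the number of principal transitions; this holds even though the WAM is not locally linear, using that |ρ|_c2 ≤ |ρ|_p (global bound) and that maximal →c1 blocks have length ≤ |t̄| while their number is bounded by the number of non-→c1 transitions, itself O(|ρ|_p). -/

import Mathlib

/-- Pure λ-terms (codes of the machine). -/
inductive PTerm : Type
  | var : ℕ → PTerm
  | lam : ℕ → PTerm → PTerm
  | app : PTerm → PTerm → PTerm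
deriving DecidableEq

def PTerm.fv : PTerm → Finset ℕ
  | .var x => {x}
  | .lam x t => t.fv.erase x
  | .app t u => t.fv ∪ u.fv

def PTerm.size : PTerm → ℕ
  | .var _ => 1
  | .lam _ t => t.size + 1
  | .app t u => t.size + u.size + 1
def PTerm.rename (x y : ℕ) : PTerm → PTerm
  | .var z => if z = x then .var y else .var z
  | .lam z t => if z = x then .lam z t else .lam z (t.rename x y)
  | .app t u => .app (t.rename x y) (u.rename x y)

/-- α-equivalence on pure terms. -/
inductive PAlpha : PTerm → PTerm → Prop
  | var (x : ℕ) : PAlpha (.var x) (.var x)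
  | app : PAlpha t t' → PAlpha u u' → PAlpha (.app t u) (.app t' u')
  | lam (x y : ℕ) (t t' : PTerm) :
      (y = x ∨ y ∉ t.fv) → PAlpha (t.rename x y) t' → PAlpha (.lam x t) (.lam y t')

/-- WAM global environments: lists of substitutions `[x←t̄]`. -/
abbrev WEnv := List (ℕ × PTerm)

/-- WAM dump entries `(E, x, π)`. -/
abbrev WDump := List (WEnv × ℕ × List PTerm)

/-- WAM states `(t̄ | π | D | E)`. -/
structure WState : Type where
  code : PTerm
  stack : List PTerm
  dump : WDump
  env : WEnv

/-- The WAM transitions, given as an execution relation counting the numbers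
    of `→c1`, `→c2`, multiplicative and exponential transitions. -/
inductive WExec : ℕ → ℕ → ℕ → ℕ → WState → WState → Prop
  | refl (s : WState) : WExec 0 0 0 0 s s
  | c1step {c₁ c₂ m e : ℕ} {s'' : WState} (t u : PTerm) (π : List PTerm)
      (D : WDump) (E : WEnv) :
      WExec c₁ c₂ m e ⟨t, u :: π, D, E⟩ s'' →
      WExec (c₁ + 1) c₂ m e ⟨.app t u, π, D, E⟩ s''
  | c2step {c₁ c₂ m e : ℕ} {s'' : WState} (x : ℕ) (t : PTerm) (π : List PTerm)
      (D : WDump) (E₁ E₂ : WEnv) :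
      (∀ p ∈ E₁, p.1 ≠ x) →
      WExec c₁ c₂ m e ⟨t, [], (E₁, x, π) :: D, E₂⟩ s'' →
      WExec c₁ (c₂ + 1) m e ⟨.var x, π, D, E₁ ++ (x, t) :: E₂⟩ s''
  | mstep {c₁ c₂ m e : ℕ} {s'' : WState} (x : ℕ) (t u : PTerm) (π : List PTerm)
      (D : WDump) (E : WEnv) :
      WExec c₁ c₂ m e ⟨t, π, D, (x, u) :: E⟩ s'' →
      WExec c₁ c₂ (m + 1) e ⟨.lam x t, u :: π, D, E⟩ s''
  | estep {c₁ c₂ m e : ℕ} {s'' : WState} (y : ℕ) (b : PTerm) (v' : PTerm)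
      (x : ℕ) (π : List PTerm) (D : WDump) (E₁ E : WEnv) :
      PAlpha (.lam y b) v' →
      WExec c₁ c₂ m e ⟨v', π, D, E₁ ++ (x, .lam y b) :: E⟩ s'' →
      WExec c₁ c₂ m (e + 1) ⟨.lam y b, [], (E₁, x, π) :: D, E⟩ s''

/-! The total size of the terms stored in a state is a potential: `→c1`, `→c2` and `→m` each
lower it by exactly one, while `→e` copies an abstraction into the environment and raises it by
the size of that abstraction. Every term in a reachable state is a subterm of `t̄`, or an
α-variant of one, so it has size at most `|t̄|`. Hence `|ρ|_c1 + |ρ|_c2 + |ρ|_m ≤ |t̄|·(|ρ|_e + 1)`. -/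

theorem PTerm.size_rename (x y : ℕ) (t : PTerm) : (t.rename x y).size = t.size := by
  induction t with
  | var z => simp only [PTerm.rename]; split <;> rfl
  | lam z t ih => simp only [PTerm.rename]; split <;> simp [PTerm.size, ih]
  | app t u iht ihu => simp [PTerm.rename, PTerm.size, iht, ihu]

theorem PAlpha.size_eq {t t' : PTerm} (h : PAlpha t t') : t.size = t'.size := by
  induction h with
  | var => rfl
  | app _ _ iht ihu => simp [PTerm.size, iht, ihu]
  | lam x y t t' _ _ ih => simp only [PTerm.size]; rw [← ih, PTerm.size_rename]

namespace WState

def terms (s : WState) : List PTerm :=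
  s.code :: s.stack ++ s.dump.flatMap (fun d => d.1.map Prod.snd ++ d.2.2) ++ s.env.map Prod.snd

def weight (s : WState) : ℕ := (s.terms.map PTerm.size).sum

def SizeBounded (N : ℕ) (s : WState) : Prop := ∀ u ∈ s.terms, u.size ≤ N

variable {N : ℕ} {x : ℕ} {t u : PTerm} {π : List PTerm} {D : WDump} {E E₁ E₂ : WEnv}

theorem weight_c1 : weight ⟨.app t u, π, D, E⟩ = weight ⟨t, u :: π, D, E⟩ + 1 := by
  simp [weight, terms, PTerm.size, Nat.add_assoc, Nat.add_comm, Nat.add_left_comm]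

theorem weight_c2 :
    weight ⟨.var x, π, D, E₁ ++ (x, t) :: E₂⟩ = weight ⟨t, [], (E₁, x, π) :: D, E₂⟩ + 1 := by
  simp [weight, terms, PTerm.size, Nat.add_assoc, Nat.add_comm, Nat.add_left_comm]

theorem weight_m : weight ⟨.lam x t, u :: π, D, E⟩ = weight ⟨t, π, D, (x, u) :: E⟩ + 1 := by
  simp [weight, terms, PTerm.size, Nat.add_assoc, Nat.add_comm, Nat.add_left_comm]

theorem weight_e {v v' : PTerm} (h : v.size = v'.size) :
    weight ⟨v', π, D, E₁ ++ (x, v) :: E⟩ = weight ⟨v, [], (E₁, x, π) :: D, E⟩ + v.size := by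
  simp [weight, terms, h, Nat.add_assoc, Nat.add_comm, Nat.add_left_comm]

theorem SizeBounded.c1 (h : SizeBounded N ⟨.app t u, π, D, E⟩) :
    SizeBounded N ⟨t, u :: π, D, E⟩ := by
  simp only [SizeBounded, terms, List.forall_mem_cons, List.forall_mem_append, List.cons_append,
    PTerm.size] at h ⊢
  grind

theorem SizeBounded.c2 (h : SizeBounded N ⟨.var x, π, D, E₁ ++ (x, t) :: E₂⟩) :
    SizeBounded N ⟨t, [], (E₁, x, π) :: D, E₂⟩ := by
  simp only [SizeBounded, terms, List.forall_mem_cons, List.forall_mem_append, List.flatMap_cons,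
    List.map_cons, List.map_append, List.cons_append, PTerm.size] at h ⊢
  grind

theorem SizeBounded.m (h : SizeBounded N ⟨.lam x t, u :: π, D, E⟩) :
    SizeBounded N ⟨t, π, D, (x, u) :: E⟩ := by
  simp only [SizeBounded, terms, List.forall_mem_cons, List.forall_mem_append, List.map_cons,
    List.cons_append, PTerm.size] at h ⊢
  grind

theorem SizeBounded.e {v v' : PTerm} (hv : v.size = v'.size)
    (h : SizeBounded N ⟨v, [], (E₁, x, π) :: D, E⟩) :
    SizeBounded N ⟨v', π, D, E₁ ++ (x, v) :: E⟩ := by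
  simp only [SizeBounded, terms, List.forall_mem_cons, List.forall_mem_append, List.flatMap_cons,
    List.map_cons, List.map_append, List.cons_append] at h ⊢
  grind

theorem SizeBounded.code_size_le (h : SizeBounded N s) : s.code.size ≤ N :=
  h _ List.mem_cons_self

end WState

open WState in
theorem WExec.add_weight_le {N c₁ c₂ m e : ℕ} {s s' : WState} (h : WExec c₁ c₂ m e s s')
    (hs : s.SizeBounded N) : c₁ + c₂ + m + s'.weight ≤ s.weight + e * N := by
  induction h with
  | refl => simp
  | c1step _ _ _ _ _ _ ih => have := ih hs.c1; rw [weight_c1]; omega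
  | c2step _ _ _ _ _ _ _ _ ih => have := ih hs.c2; rw [weight_c2]; omega
  | mstep _ _ _ _ _ _ _ ih => have := ih hs.m; rw [weight_m]; omega
  | estep y b _ _ _ _ _ _ hα _ ih =>
    have hv := hα.size_eq
    have := ih (hs.e hv)
    rw [weight_e hv] at this
    have : (PTerm.lam y b).size ≤ N := hs.code_size_le
    rw [Nat.add_one_mul]
    omega

/-- The WAM has globally bilinear commutative transitions: there is a constant
    `K` such that, for every execution `ρ` of initial (closed) code `t̄`, the
    number of commutative transitions satisfies
    `|ρ|_c1 + |ρ|_c2 ≤ K·(|t̄|+1)·(|ρ|_p + 1)`,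
    i.e. `|ρ|_c = O((|t̄|+1)·|ρ|_p)`. -/
theorem wam_globally_bilinear :
    ∃ K : ℕ, ∀ (t₀ : PTerm) (c₁ c₂ m e : ℕ) (s : WState),
      t₀.fv = ∅ →
      WExec c₁ c₂ m e ⟨t₀, [], [], []⟩ s →
      c₁ + c₂ ≤ K * (t₀.size + 1) * (m + e + 1) := by
  refine ⟨1, fun t₀ c₁ c₂ m e s _ h => ?_⟩
  have hbound : WState.SizeBounded t₀.size ⟨t₀, [], [], []⟩ := by
    simp [WState.SizeBounded, WState.terms]
  have hweight : WState.weight ⟨t₀, [], [], []⟩ = t₀.size := by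
    simp [WState.weight, WState.terms]
  have key := h.add_weight_le hbound
  rw [hweight] at key
  calc c₁ + c₂ ≤ t₀.size * (e + 1) := by linarith
    _ ≤ 1 * (t₀.size + 1) * (m + e + 1) := by rw [one_mul]; gcongr <;> omega
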